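/- arXiv:1102.5682 — 3 statements merged into one kernel-verified Lean document; each statement's English description precedes it below -/
import Mathlib

section
/- Let M = (Q, Σ, δ, q0, F) and N = (P, Σ, μ, p0, F') be DFAs over the same alphabet that are k-similar (L(M) △ L(N) contains only words of length less than k). Let q1, q2 ∈ Q and let w1, w2 ∈ Σ* be words with δ(q0, w_i) = q_i and |w_i| = in-level_M(q_i) for i = 1, 2 (in particular both in-levels are finite). If q1 and q2 are not k-similar as states, then μ(p0, w1) and μ(p0, w2) are not k-similar as states of N. -/
/-!
Distance of languages is an ultrametric, and a word `w` reaching `q` in `M` and `p` in `N`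
gives `d(q, p) ≤ k - |w|`, since `M` and `N` agree on words of length at least `k`.
Put `m = min(k, |w₁|, |w₂|)`. If `p₁ ∼_k p₂`, then `d(p₁, p₂) ≤ k - m` because
`in-level_N(pᵢ) ≥ |wᵢ|`; the chain `q₁, p₁, p₂, q₂` gives `d(q₁, q₂) ≤ k - m`, and by
maximality of the `wᵢ` we have `m = min(k, in-level_M(q₁), in-level_M(q₂))`, so `q₁ ∼_k q₂`.
-/

/-- The distance `d(L, L')` between two languages: the least `ℓ ∈ ℕ` such that
`L` and `L'` agree on all words of length at least `ℓ` (with `min ∅ = ∞`). -/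
noncomputable def langDist {α : Type} (L L' : Set (List α)) : ℕ∞ :=
  sInf {n : ℕ∞ | ∃ ℓ : ℕ, n = (ℓ : ℕ∞) ∧
    ∀ w : List α, ℓ ≤ w.length → (w ∈ L ↔ w ∈ L')}

/-- A deterministic finite automaton with a partial transition function. -/
structure PDFA (α σ : Type) where
  step : σ → α → Option σ
  start : σ
  accept : Set σ

namespace PDFA

variable {α σ : Type}

/-- Running the partial DFA from state `q` on the word `w`. -/
def evalFrom (M : PDFA α σ) (q : σ) (w : List α) : Option σ :=
  w.foldl (fun o a => o.bind fun r => M.step r a) (some q)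

/-- Running the partial DFA from the start state. -/
def eval (M : PDFA α σ) (w : List α) : Option σ :=
  M.evalFrom M.start w

/-- The right-language `L_M(q)` of the state `q`. -/
def rightLang (M : PDFA α σ) (q : σ) : Set (List α) :=
  {w | ∃ p ∈ M.accept, M.evalFrom q w = some p}

/-- The language recognised by the partial DFA. -/
def accepts (M : PDFA α σ) : Set (List α) :=
  {w | ∃ p ∈ M.accept, M.eval w = some p}

/-- The left-language `δ⁻¹(q)` of the state `q`: all words leading to `q`. -/
def leftLang (M : PDFA α σ) (q : σ) : Set (List α) :=
  {w | M.eval w = some q}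

/-- `in-level_M(q)`: the supremum of the lengths of words leading to `q`. -/
noncomputable def inLevel (M : PDFA α σ) (q : σ) : ℕ∞ :=
  ⨆ w ∈ M.leftLang q, (w.length : ℕ∞)

/-- A DFA is minimal if all states are reachable and have pairwise
distinct right-languages. -/
def IsMinimal (M : PDFA α σ) : Prop :=
  (∀ q : σ, ∃ w : List α, M.eval w = some q) ∧
  ∀ q p : σ, M.rightLang q = M.rightLang p → q = p

end PDFA

/-- The distance between a state of `M` and a state of `N`. -/
noncomputable def stateDist {α σ τ : Type} (M : PDFA α σ) (N : PDFA α τ)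
    (q : σ) (p : τ) : ℕ∞ :=
  langDist (M.rightLang q) (N.rightLang p)

/-- Two states `q` of `M` and `p` of `N` are `k`-similar if
`d(q, p) + min(k, in-level_M(q), in-level_N(p)) ≤ k`. -/
def kSimSt {α σ τ : Type} (M : PDFA α σ) (N : PDFA α τ) (k : ℕ) (q : σ) (p : τ) : Prop :=
  stateDist M N q p + min (k : ℕ∞) (min (M.inLevel q) (N.inLevel p)) ≤ (k : ℕ∞)

/-- Two DFAs are `k`-similar if their languages differ only on words of length `< k`. -/
def kSimDFA {α σ τ : Type} (M : PDFA α σ) (N : PDFA α τ) (k : ℕ) : Prop :=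
  ∀ w ∈ symmDiff M.accepts N.accepts, w.length < k

lemma langDist_le_iff {α : Type} {L L' : Set (List α)} {ℓ : ℕ} :
    langDist L L' ≤ ℓ ↔ ∀ w : List α, ℓ ≤ w.length → (w ∈ L ↔ w ∈ L') := by
  refine ⟨fun h w hw => ?_, fun h => sInf_le ⟨ℓ, rfl, h⟩⟩
  obtain ⟨_, ⟨n, rfl, hn⟩, hlt⟩ :=
    sInf_lt_iff.mp (h.trans_lt (ENat.natCast_lt_natCast.mpr (Nat.lt_succ_self ℓ)))
  exact hn w ((Nat.lt_succ_iff.mp (ENat.natCast_lt_natCast.mp hlt)).trans hw)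

lemma langDist_comm {α : Type} (L L' : Set (List α)) : langDist L L' = langDist L' L := by
  simp only [langDist, Iff.comm]

lemma langDist_le_of_le_of_le {α : Type} {L L' L'' : Set (List α)} {ℓ : ℕ}
    (h : langDist L L' ≤ ℓ) (h' : langDist L' L'' ≤ ℓ) : langDist L L'' ≤ ℓ :=
  langDist_le_iff.mpr fun w hw => (langDist_le_iff.mp h w hw).trans (langDist_le_iff.mp h' w hw)

namespace PDFA

variable {α σ : Type} (M : PDFA α σ) {w : List α} {q : σ}

lemma eval_append (h : M.eval w = some q) (u : List α) : M.eval (w ++ u) = M.evalFrom q u := by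
  rw [eval, evalFrom, List.foldl_append]
  exact congrArg (List.foldl _ · u) h

lemma mem_rightLang_iff (h : M.eval w = some q) (u : List α) :
    u ∈ M.rightLang q ↔ w ++ u ∈ M.accepts := by
  simp only [rightLang, accepts, Set.mem_ofPred_eq, M.eval_append h u]

lemma length_le_inLevel (h : M.eval w = some q) : (w.length : ℕ∞) ≤ M.inLevel q :=
  le_iSup₂ (f := fun (v : List α) (_ : v ∈ M.leftLang q) => (v.length : ℕ∞)) w h

end PDFA

lemma kSimDFA.mem_accepts_iff {α σ τ : Type} {M : PDFA α σ} {N : PDFA α τ} {k : ℕ}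
    (hMN : kSimDFA M N k) {w : List α} (hw : k ≤ w.length) :
    w ∈ M.accepts ↔ w ∈ N.accepts :=
  not_not.mp fun h => (hMN w (Set.mem_symmDiff.mpr (by tauto))).not_ge hw

lemma kSimDFA.stateDist_le {α σ τ : Type} {M : PDFA α σ} {N : PDFA α τ} {k : ℕ}
    (hMN : kSimDFA M N k) {w : List α} {q : σ} {p : τ}
    (hq : M.eval w = some q) (hp : N.eval w = some p) :
    stateDist M N q p ≤ (k - w.length : ℕ) :=
  langDist_le_iff.mpr fun u hu => by
    rw [M.mem_rightLang_iff hq, N.mem_rightLang_iff hp]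
    exact hMN.mem_accepts_iff (by rw [List.length_append]; omega)

lemma ENat.add_natCast_le_natCast_iff {d : ℕ∞} {m k : ℕ} (hmk : m ≤ k) :
    d + m ≤ k ↔ d ≤ (k - m : ℕ) := by
  rw [ENat.natCast_sub,
    (ENat.addLECancellable_natCast m).le_tsub_iff_right (by exact_mod_cast hmk)]

/-- If `M ∼_k N`, `q₁, q₂` are states of `M` reached by words `w₁, w₂` of maximal
length (`|wᵢ| = in-level_M(qᵢ)`), and `q₁ ≁_k q₂`, then the states reached in `N`
by `w₁` and `w₂` are not `k`-similar either. -/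
theorem not_kSimSt_of_not_kSimSt {α σ τ : Type} (M : PDFA α σ) (N : PDFA α τ) (k : ℕ)
    (hMN : kSimDFA M N k) (q1 q2 : σ) (w1 w2 : List α)
    (h1 : M.eval w1 = some q1) (h2 : M.eval w2 = some q2)
    (hl1 : (w1.length : ℕ∞) = M.inLevel q1) (hl2 : (w2.length : ℕ∞) = M.inLevel q2)
    (hq : ¬ kSimSt M M k q1 q2)
    (p1 p2 : τ) (hp1 : N.eval w1 = some p1) (hp2 : N.eval w2 = some p2) :
    ¬ kSimSt N N k p1 p2 := by
  intro hp
  apply hq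
  set m := min k (min w1.length w2.length)
  have hmk : m ≤ k := min_le_left _ _
  have hm : (m : ℕ∞) = min (k : ℕ∞) (min (w1.length : ℕ∞) w2.length) := by
    simp only [m, Nat.mono_cast.map_min]
  have hp1p2 : stateDist N N p1 p2 ≤ (k - m : ℕ) := by
    refine (ENat.add_natCast_le_natCast_iff hmk).mp (le_trans ?_ hp)
    rw [hm]
    gcongr
    exacts [N.length_le_inLevel hp1, N.length_le_inLevel hp2]
  have hq1p1 : stateDist M N q1 p1 ≤ (k - m : ℕ) :=
    (hMN.stateDist_le h1 hp1).trans (by gcongr; omega)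
  have hq2p2 : stateDist M N q2 p2 ≤ (k - m : ℕ) :=
    (hMN.stateDist_le h2 hp2).trans (by gcongr; omega)
  rw [kSimSt, ← hl1, ← hl2, ← hm, ENat.add_natCast_le_natCast_iff hmk]
  exact langDist_le_of_le_of_le (langDist_le_of_le_of_le hq1p1 hp1p2)
    ((langDist_comm _ _).trans_le hq2p2)
end

section
/- Let M be a DFA and let p, q be states of M whose right-languages L_M(p) and L_M(q) are finite and nonempty, and set m(r) = max{|w| : w ∈ L_M(r)} for such states r. If m(p) ≠ m(q) then d(p, q) = max(m(p), m(q)) + 1, and if m(p) = m(q) then d(p, q) ≤ max(m(p), m(q)) + 1. -/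
/-- For states `p, q` with finite nonempty right-languages, where
`m(r) = max {|w| : w ∈ L_M(r)}`: if `m(p) ≠ m(q)` then
`d(p, q) = max(m(p), m(q)) + 1`, and if `m(p) = m(q)` then
`d(p, q) ≤ max(m(p), m(q)) + 1`. -/
theorem stateDist_of_finite_rightLang {α σ : Type} (M : PDFA α σ) (p q : σ)
    (hpfin : (M.rightLang p).Finite) (hpne : (M.rightLang p).Nonempty)
    (hqfin : (M.rightLang q).Finite) (hqne : (M.rightLang q).Nonempty)
    (mp mq : ℕ)
    (hmp : IsGreatest (List.length '' M.rightLang p) mp)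
    (hmq : IsGreatest (List.length '' M.rightLang q) mq) :
    (mp ≠ mq → stateDist M M p q = ((max mp mq : ℕ) : ℕ∞) + 1) ∧
    (mp = mq → stateDist M M p q ≤ ((max mp mq : ℕ) : ℕ∞) + 1) := by
  have hub : stateDist M M p q ≤ ((max mp mq : ℕ) : ℕ∞) + 1 := by
    apply sInf_le
    refine ⟨max mp mq + 1, by push_cast; ring, ?_⟩
    intro w hw
    constructor <;> intro hmem
    · exfalso
      have h1 : w.length ≤ mp := hmp.2 ⟨w, hmem, rfl⟩
      omega
    · exfalso
      have h1 : w.length ≤ mq := hmq.2 ⟨w, hmem, rfl⟩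
      omega
  refine ⟨?_, fun _ => hub⟩
  intro hne
  refine le_antisymm hub ?_
  apply le_sInf
  rintro n ⟨ℓ, rfl, hagree⟩
  rcases lt_or_gt_of_ne hne with h | h
  · -- mp < mq, witness in L(q) of length mq
    obtain ⟨w, hwq, hwlen⟩ := hmq.1
    have hwp : w ∉ M.rightLang p := fun hin => by
      have := hmp.2 ⟨w, hin, rfl⟩; omega
    have hℓ : max mp mq + 1 ≤ ℓ := by
      by_contra hc
      exact hwp ((hagree w (by omega)).mpr hwq)
    exact_mod_cast (by exact_mod_cast hℓ : ((max mp mq + 1 : ℕ) : ℕ∞) ≤ ℓ)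
  · obtain ⟨w, hwp, hwlen⟩ := hmp.1
    have hwq : w ∉ M.rightLang q := fun hin => by
      have := hmq.2 ⟨w, hin, rfl⟩; omega
    have hℓ : max mp mq + 1 ≤ ℓ := by
      by_contra hc
      exact hwq ((hagree w (by omega)).mp hwp)
    exact_mod_cast (by exact_mod_cast hℓ : ((max mp mq + 1 : ℕ) : ℕ∞) ≤ ℓ)
end

section
/- Let M be a minimal DFA and k ∈ ℕ, and let N be any DFA obtained from M by a (possibly empty) sequence of merge steps, where each step merges a surviving state q into a distinct surviving state p such that q and p are k-similar as states of the original DFA M and in-level_M(q) ≤ in-level_M(p). Then for all surviving states p', p of N and every word w with δ_N(p', w) = p, if in-level_M(p) < k then |w| ≤ in-level_M(p) − in-level_M(p'). -/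
/-- Merging state `q` into state `p`: every transition ending in `q` is redirected
to end in `p`, the start state becomes `p` if it was `q`, and `q` is deleted
(removed from the accepting states; it becomes unreachable). -/
def PDFA.merge {α σ : Type} [DecidableEq σ] (M : PDFA α σ) (q p : σ) : PDFA α σ where
  step r a := (M.step r a).map fun x => if x = q then p else x
  start := if M.start = q then p else M.start
  accept := M.accept \ {q}

/-- `MergeSeq M k N S` holds if the DFA `N` with surviving state set `S` is obtained
from `M` by a (possibly empty) sequence of merge steps, each merging a surviving
state `q` into a distinct surviving state `p` such that `q ∼_k p` as states of the
original DFA `M` and `in-level_M(q) ≤ in-level_M(p)`. -/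
inductive MergeSeq {α σ : Type} [DecidableEq σ] (M : PDFA α σ) (k : ℕ) :
    PDFA α σ → Set σ → Prop where
  | refl : MergeSeq M k M Set.univ
  | step {N : PDFA α σ} {S : Set σ} {q p : σ} :
      MergeSeq M k N S → q ∈ S → p ∈ S → q ≠ p →
      kSimSt M M k q p → M.inLevel q ≤ M.inLevel p →
      MergeSeq M k (N.merge q p) (S \ {q})

/-!
In `M` every word reaching `r` extends by one letter to a word reaching `δ(r, a)`, so since all
states are reachable each transition raises the in-level by at least one. Merging `q` into `p`
only redirects transitions ending in `q` to `p`, and `in-level_M(q) ≤ in-level_M(p)`, so every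
transition of a merged automaton still raises the `M`-in-level by at least one. Along a word `w`
the in-level thus grows by at least `|w|`; the bound `in-level_M(p) < k` makes the in-levels
finite, so this can be rewritten as a subtraction.
-/

namespace PDFA

variable {α σ : Type}

theorem evalFrom_cons (M : PDFA α σ) (q : σ) (a : α) (w : List α) :
    M.evalFrom q (a :: w) = (M.step q a).bind fun r => M.evalFrom r w := by
  have foldl_none : ∀ v : List α,
      v.foldl (fun o b => o.bind fun r => M.step r b) none = none := by
    intro v; induction v <;> simp_all
  cases h : M.step q a <;> simp [evalFrom, h, foldl_none]

theorem evalFrom_append_singleton (M : PDFA α σ) (q : σ) (w : List α) (a : α) :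
    M.evalFrom q (w ++ [a]) = (M.evalFrom q w).bind fun r => M.step r a := by
  simp [evalFrom]

theorem append_singleton_mem_leftLang {M : PDFA α σ} {r s : σ} {a : α}
    (h : M.step r a = some s) {w : List α} (hw : w ∈ M.leftLang r) :
    w ++ [a] ∈ M.leftLang s := by
  simp_all [leftLang, eval, evalFrom_append_singleton]

theorem inLevel_add_one_le_of_step {M : PDFA α σ} {r s : σ} {a : α}
    (hr : (M.leftLang r).Nonempty) (h : M.step r a = some s) :
    M.inLevel r + 1 ≤ M.inLevel s := by
  rw [inLevel, ENat.biSup_add hr]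
  refine iSup₂_le fun w hw => ?_
  simpa [inLevel] using le_iSup₂ (f := fun v (_ : v ∈ M.leftLang s) => (v.length : ℕ∞))
    (w ++ [a]) (append_singleton_mem_leftLang h hw)

theorem add_length_le_of_evalFrom_eq_some (N : PDFA α σ) {f : σ → ℕ∞}
    (hf : ∀ r a s, N.step r a = some s → f r + 1 ≤ f s) (w : List α) {p' p : σ}
    (hw : N.evalFrom p' w = some p) : f p' + w.length ≤ f p := by
  induction w generalizing p' with
  | nil => simp_all [evalFrom]
  | cons a w ih =>
    rw [evalFrom_cons] at hw
    obtain ⟨r, hstep, hr⟩ := Option.bind_eq_some_iff.mp hw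
    calc f p' + ((a :: w).length : ℕ∞) = f p' + 1 + w.length := by
          push_cast [List.length_cons]; ring
      _ ≤ f r + w.length := add_le_add_left (hf p' a r hstep) _
      _ ≤ f p := ih hr

end PDFA

theorem MergeSeq.inLevel_add_one_le_of_step {α σ : Type} [DecidableEq σ] {M : PDFA α σ}
    (hreach : ∀ q, (M.leftLang q).Nonempty) {k : ℕ} {N : PDFA α σ} {S : Set σ}
    (hseq : MergeSeq M k N S)
    {r s : σ} {a : α} (h : N.step r a = some s) :
    M.inLevel r + 1 ≤ M.inLevel s := by
  induction hseq generalizing s with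
  | refl => exact PDFA.inLevel_add_one_le_of_step (hreach r) h
  | @step N S q p _ _ _ _ _ hqp ih =>
    obtain ⟨x, hx, rfl⟩ := Option.map_eq_some_iff.mp h
    split_ifs with hxq
    · exact (ih (hxq ▸ hx)).trans hqp
    · exact ih hx

theorem leading_word_length_le_general {α σ : Type} [DecidableEq σ]
    (M : PDFA α σ) (hM : M.IsMinimal) (k : ℕ)
    (N : PDFA α σ) (S : Set σ) (hseq : MergeSeq M k N S) :
    ∀ p' ∈ S, ∀ p ∈ S, ∀ w : List α, N.evalFrom p' w = some p →
      M.inLevel p < (k : ℕ∞) →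
      (w.length : ℕ∞) ≤ M.inLevel p - M.inLevel p' := by
  intro p' _ p _ w hw hpk
  have hgrow : M.inLevel p' + w.length ≤ M.inLevel p :=
    N.add_length_le_of_evalFrom_eq_some
      (fun _ _ _ => hseq.inLevel_add_one_le_of_step hM.1) w hw
  have hfin : M.inLevel p' ≠ ⊤ :=
    ne_top_of_lt ((le_self_add.trans hgrow).trans_lt hpk)
  exact ENat.le_sub_of_add_le_left hfin hgrow

/-- During merging, words in the merged automaton only lead "upwards" in in-level:
if `N` (with surviving states `S`) is obtained from the minimal DFA `M` by merge
steps and `δ_N(p', w) = p` with `in-level_M(p) < k`, then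
`|w| ≤ in-level_M(p) − in-level_M(p')`. -/
theorem leading_word_length_le {α σ : Type} [Fintype α] [Fintype σ] [DecidableEq σ]
    (M : PDFA α σ) (hM : M.IsMinimal) (k : ℕ)
    (N : PDFA α σ) (S : Set σ) (hseq : MergeSeq M k N S) :
    ∀ p' ∈ S, ∀ p ∈ S, ∀ w : List α, N.evalFrom p' w = some p →
      M.inLevel p < (k : ℕ∞) →
      (w.length : ℕ∞) ≤ M.inLevel p - M.inLevel p' :=
  leading_word_length_le_general M hM k N S hseq
end
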